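/- Let K₁ be a nondegenerate triangle in ℝ², c ∈ ℝ², and let K₂ = T(K₁) be its image under the point reflection T(x) = 2c − x. For a triangle K with centroid M_K, and multi-indices α, β ∈ ℕ² with |α| = 4 and |β| = 3, set c_K^{αβ} := ∫_K ((I − Π_HHJ^K)∇²((x − M_K)^β)) : ((I − Π_HHJ^K)∇²((x − M_K)^α)) dx. Then c_{K₁}^{αβ} = −c_{K₂}^{αβ} for all such α, β. -/

import Mathlib

noncomputable section
open MeasureTheory

namespace PaperStmt

/-- Euclidean dot product on `ℝ²`. -/
def dotp (v w : ℝ × ℝ) : ℝ := v.1 * w.1 + v.2 * w.2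

/-- Euclidean length on `ℝ²`. -/
def len (v : ℝ × ℝ) : ℝ := Real.sqrt (v.1 ^ 2 + v.2 ^ 2)

/-- Cross product (determinant) of two planar vectors. -/
def crossp (v w : ℝ × ℝ) : ℝ := v.1 * w.2 - v.2 * w.1

/-- The vertices `p 0, p 1, p 2` form a nondegenerate triangle listed counterclockwise. -/
def Ccw (p : Fin 3 → ℝ × ℝ) : Prop := 0 < crossp (p 1 - p 0) (p 2 - p 0)

/-- Vector of the edge `e_i` opposite vertex `p i`, oriented counterclockwise
(from `p (i+1)` to `p (i−1)`). -/
def edgeVec (p : Fin 3 → ℝ × ℝ) (i : Fin 3) : ℝ × ℝ := p (i - 1) - p (i + 1)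

/-- Length `|e_i|` of the edge opposite vertex `p i`. -/
def elen (p : Fin 3 → ℝ × ℝ) (i : Fin 3) : ℝ := len (edgeVec p i)

/-- Unit tangent `t_i = (p_{i−1} − p_{i+1})/|e_i|` of edge `e_i`. -/
def tvec (p : Fin 3 → ℝ × ℝ) (i : Fin 3) : ℝ × ℝ := (elen p i)⁻¹ • edgeVec p i

/-- Outward unit normal `n_i` of edge `e_i` (clockwise rotation of the tangent,
which points outward for a counterclockwise triangle). -/
def nvec (p : Fin 3 → ℝ × ℝ) (i : Fin 3) : ℝ × ℝ := ((tvec p i).2, -(tvec p i).1)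

/-- Interior angle `θ_i` of the triangle at the vertex `p i`. -/
def angleAt (p : Fin 3 → ℝ × ℝ) (i : Fin 3) : ℝ :=
  Real.arccos (dotp (p (i + 1) - p i) (p (i - 1) - p i) /
    (len (p (i + 1) - p i) * len (p (i - 1) - p i)))

/-- Outer product `v wᵀ` of two planar (column) vectors, as a `2 × 2` matrix. -/
def outerProd (v w : ℝ × ℝ) : Matrix (Fin 2) (Fin 2) ℝ :=
  !![v.1 * w.1, v.1 * w.2; v.2 * w.1, v.2 * w.2]

/-- Basis matrices `φ_HHJ^i = −(1/(2 sin θ_{i−1} sin θ_{i+1})) (t_{i−1} t_{i+1}ᵀ + t_{i+1} t_{i−1}ᵀ)`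
of the lowest-order Hellan–Herrmann–Johnson element. -/
def phiHHJ (p : Fin 3 → ℝ × ℝ) (i : Fin 3) : Matrix (Fin 2) (Fin 2) ℝ :=
  (-(2 * Real.sin (angleAt p (i - 1)) * Real.sin (angleAt p (i + 1)))⁻¹) •
    (outerProd (tvec p (i - 1)) (tvec p (i + 1)) + outerProd (tvec p (i + 1)) (tvec p (i - 1)))

/-- The quadratic form `vᵀ τ v` of a `2 × 2` matrix on a planar vector. -/
def qf (τ : Matrix (Fin 2) (Fin 2) ℝ) (v : ℝ × ℝ) : ℝ :=
  v.1 * (τ 0 0 * v.1 + τ 0 1 * v.2) + v.2 * (τ 1 0 * v.1 + τ 1 1 * v.2)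

end PaperStmt

namespace PaperStmt

/-- Directional derivative of `f` along `v`. -/
def dderiv (v : ℝ × ℝ) (f : ℝ × ℝ → ℝ) : ℝ × ℝ → ℝ := fun x => fderiv ℝ f x v

/-- Second directional derivative `D²f[u, v]`. -/
def d2 (u v : ℝ × ℝ) (f : ℝ × ℝ → ℝ) : ℝ × ℝ → ℝ := dderiv u (dderiv v f)

/-- Third directional derivative `D³f[u, v, w]`. -/
def d3 (u v w : ℝ × ℝ) (f : ℝ × ℝ → ℝ) : ℝ × ℝ → ℝ := dderiv u (dderiv v (dderiv w f))

end PaperStmt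

namespace PaperStmt

/-- Area `|K|` of the (counterclockwise) triangle with vertices `p`. -/
def area (p : Fin 3 → ℝ × ℝ) : ℝ := crossp (p 1 - p 0) (p 2 - p 0) / 2

/-- Centroid `M_K` of the triangle with vertices `p`. -/
def centroid (p : Fin 3 → ℝ × ℝ) : ℝ × ℝ := (3 : ℝ)⁻¹ • (p 0 + p 1 + p 2)

/-- The (closed) triangle `K` with vertices `p`, as a subset of `ℝ²`. -/
def tri (p : Fin 3 → ℝ × ℝ) : Set (ℝ × ℝ) := convexHull ℝ {p 0, p 1, p 2}

/-- The cubic polynomials `φ₁, φ₂, φ₃, φ₄` centered at the centroid: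
`φ₁ = (x₁−M₁)³/(6|K|^{1/2})`, `φ₂ = (x₁−M₁)²(x₂−M₂)/(2|K|^{1/2})`,
`φ₃ = (x₁−M₁)(x₂−M₂)²/(2|K|^{1/2})`, `φ₄ = (x₂−M₂)³/(6|K|^{1/2})`. -/
def phiK (p : Fin 3 → ℝ × ℝ) : Fin 4 → ℝ × ℝ → ℝ :=
  ![fun x => (x.1 - (centroid p).1) ^ 3 / (6 * Real.sqrt (area p)),
    fun x => (x.1 - (centroid p).1) ^ 2 * (x.2 - (centroid p).2) / (2 * Real.sqrt (area p)),
    fun x => (x.1 - (centroid p).1) * (x.2 - (centroid p).2) ^ 2 / (2 * Real.sqrt (area p)),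
    fun x => (x.2 - (centroid p).2) ^ 3 / (6 * Real.sqrt (area p))]

/-- Hessian `∇²f` of a scalar function on `ℝ²`, as a `2 × 2` matrix field. -/
def hess (f : ℝ × ℝ → ℝ) (x : ℝ × ℝ) : Matrix (Fin 2) (Fin 2) ℝ :=
  !![d2 (1, 0) (1, 0) f x, d2 (1, 0) (0, 1) f x;
     d2 (0, 1) (1, 0) f x, d2 (0, 1) (0, 1) f x]

/-- Frobenius inner product `A : B` of two `2 × 2` matrices. -/
def frob (A B : Matrix (Fin 2) (Fin 2) ℝ) : ℝ := ∑ i : Fin 2, ∑ j : Fin 2, A i j * B i j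

/-- Mean value `(1/|e_j|) ∫_{e_j} g ds` of `g` over the edge `e_j` (with respect to
arclength measure), computed by the unit-speed-normalized parametrization of `e_j`. -/
def edgeAvg (p : Fin 3 → ℝ × ℝ) (j : Fin 3) (g : ℝ × ℝ → ℝ) : ℝ :=
  ∫ s in (0:ℝ)..1, g (p (j + 1) + s • (p (j - 1) - p (j + 1)))

/-- The Hellan–Herrmann–Johnson interpolant
`Π_HHJ τ = Σ_{j=1}^{3} ((1/|e_j|) ∫_{e_j} n_jᵀ τ n_j ds) φ_HHJ^j` of a
matrix-valued field `τ`, a constant symmetric matrix. -/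
def PiHHJ (p : Fin 3 → ℝ × ℝ) (τ : ℝ × ℝ → Matrix (Fin 2) (Fin 2) ℝ) :
    Matrix (Fin 2) (Fin 2) ℝ :=
  ∑ j : Fin 3, edgeAvg p j (fun x => qf (τ x) (nvec p j)) • phiHHJ p j

/-- The constants `γ^{ij} = (1/|K|) ∫_K ((I − Π_HHJ)∇²φ_i) : ((I − Π_HHJ)∇²φ_j) dx`. -/
def gammaHHJ (p : Fin 3 → ℝ × ℝ) (i j : Fin 4) : ℝ :=
  (area p)⁻¹ *
    ∫ x in tri p,
      frob (hess (phiK p i) x - PiHHJ p (hess (phiK p i)))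
           (hess (phiK p j) x - PiHHJ p (hess (phiK p j)))

/-- Coefficients `a₁ = |K|^{1/2} ∂³w/∂x₁³`, `a₂ = |K|^{1/2} ∂³w/∂x₁²∂x₂`,
`a₃ = |K|^{1/2} ∂³w/∂x₁∂x₂²`, `a₄ = |K|^{1/2} ∂³w/∂x₂³` (the third partial
derivatives of a cubic polynomial being constant, they are evaluated at `0`). -/
def acoef (p : Fin 3 → ℝ × ℝ) (w : ℝ × ℝ → ℝ) : Fin 4 → ℝ :=
  ![Real.sqrt (area p) * d3 (1, 0) (1, 0) (1, 0) w 0,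
    Real.sqrt (area p) * d3 (1, 0) (1, 0) (0, 1) w 0,
    Real.sqrt (area p) * d3 (1, 0) (0, 1) (0, 1) w 0,
    Real.sqrt (area p) * d3 (0, 1) (0, 1) (0, 1) w 0]

end PaperStmt

namespace PaperStmt

/-- Centered monomial `(x − M_K)^α` on the triangle with vertices `p`. -/
def monoC (p : Fin 3 → ℝ × ℝ) (α : ℕ × ℕ) : ℝ × ℝ → ℝ :=
  fun x => (x.1 - (centroid p).1) ^ α.1 * (x.2 - (centroid p).2) ^ α.2

/-- `c_K^{αβ} = ∫_K ((I − Π_HHJ)∇²((x − M_K)^β)) : ((I − Π_HHJ)∇²((x − M_K)^α)) dx`. -/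
def cKab (p : Fin 3 → ℝ × ℝ) (α β : ℕ × ℕ) : ℝ :=
  ∫ x in tri p,
    frob (hess (monoC p β) x - PiHHJ p (hess (monoC p β)))
         (hess (monoC p α) x - PiHHJ p (hess (monoC p α)))

end PaperStmt

/-!
A point reflection `x ↦ 2c − x` maps the triangle onto its image, preserves Lebesgue measure,
leaves every angle and every `φ_HHJ^j` unchanged and only flips the signs of the tangents and
normals, which enter the interpolant quadratically. Hence `Π_HHJ` commutes with the reflection.
The centered monomial `(x − M)^α` is carried to `(−1)^{|α|}` times itself, and so is its Hessian.
Therefore `c_K^{αβ}` picks up the factor `(−1)^{|α| + |β|}`, which is `−1` when `|α| + |β| = 7`.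
-/

namespace PaperStmt

lemma dderiv_const_mul (k : ℝ) (f : ℝ × ℝ → ℝ) (v : ℝ × ℝ) :
    dderiv v (fun x => k * f x) = fun x => k * dderiv v f x := by
  change (fun x => fderiv ℝ (k • f) x v) = fun x => k * fderiv ℝ f x v
  simp [fderiv_const_smul_field]

lemma dderiv_neg (f : ℝ × ℝ → ℝ) (v : ℝ × ℝ) :
    dderiv v (fun x => -f x) = fun x => -dderiv v f x := by
  funext x
  simp [dderiv, fderiv_fun_neg]

lemma dderiv_comp_const_sub (f : ℝ × ℝ → ℝ) (a v : ℝ × ℝ) :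
    dderiv v (fun x => f (a - x)) = fun x => -dderiv v f (a - x) := by
  have hf : (fun x => f (a - x)) = fun x => (f ∘ ContinuousLinearEquiv.neg ℝ) (x - a) := by
    funext x; simp
  funext x
  rw [dderiv, hf, fderiv_comp_sub, ContinuousLinearEquiv.comp_right_fderiv]
  simp [dderiv]

lemma d2_const_mul (k : ℝ) (f : ℝ × ℝ → ℝ) (u v : ℝ × ℝ) :
    d2 u v (fun x => k * f x) = fun x => k * d2 u v f x := by
  simp only [d2, dderiv_const_mul]

lemma d2_comp_const_sub (f : ℝ × ℝ → ℝ) (a u v : ℝ × ℝ) :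
    d2 u v (fun x => f (a - x)) = fun x => d2 u v f (a - x) := by
  simp only [d2, dderiv_comp_const_sub, dderiv_neg, neg_neg]

lemma hess_const_mul (k : ℝ) (f : ℝ × ℝ → ℝ) (x : ℝ × ℝ) :
    hess (fun y => k * f y) x = k • hess f x := by
  ext i j
  fin_cases i <;> fin_cases j <;> simp [hess, d2_const_mul]

lemma hess_comp_const_sub (f : ℝ × ℝ → ℝ) (a x : ℝ × ℝ) :
    hess (fun y => f (a - y)) x = hess f (a - x) := by
  simp only [hess, d2_comp_const_sub]

lemma len_neg (v : ℝ × ℝ) : len (-v) = len v := by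
  simp [len]

lemma dotp_neg_neg (u v : ℝ × ℝ) : dotp (-u) (-v) = dotp u v := by
  simp [dotp]

lemma outerProd_neg_neg (u v : ℝ × ℝ) : outerProd (-u) (-v) = outerProd u v := by
  simp [outerProd]

lemma qf_neg (A : Matrix (Fin 2) (Fin 2) ℝ) (v : ℝ × ℝ) : qf A (-v) = qf A v := by
  simp only [qf, Prod.fst_neg, Prod.snd_neg]
  ring

lemma qf_smul (k : ℝ) (A : Matrix (Fin 2) (Fin 2) ℝ) (v : ℝ × ℝ) :
    qf (k • A) v = k * qf A v := by
  simp only [qf, Matrix.smul_apply, smul_eq_mul]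
  ring

lemma frob_smul_smul (s t : ℝ) (A B : Matrix (Fin 2) (Fin 2) ℝ) :
    frob (s • A) (t • B) = s * t * frob A B := by
  simp only [frob, Fin.sum_univ_two, Matrix.smul_apply, smul_eq_mul]
  ring

lemma edgeAvg_const_mul (p : Fin 3 → ℝ × ℝ) (j : Fin 3) (k : ℝ) (g : ℝ × ℝ → ℝ) :
    edgeAvg p j (fun y => k * g y) = k * edgeAvg p j g :=
  intervalIntegral.integral_const_mul k _

lemma PiHHJ_smul (p : Fin 3 → ℝ × ℝ) (k : ℝ) (τ : ℝ × ℝ → Matrix (Fin 2) (Fin 2) ℝ) :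
    PiHHJ p (fun x => k • τ x) = k • PiHHJ p τ := by
  simp only [PiHHJ, qf_smul, edgeAvg_const_mul, Finset.smul_sum, smul_smul]

section PointReflection

variable (p : Fin 3 → ℝ × ℝ) (c : ℝ × ℝ)

lemma edgeVec_pointReflection (i : Fin 3) :
    edgeVec (fun k => (2 : ℝ) • c - p k) i = -edgeVec p i := by
  simp only [edgeVec]
  abel

lemma elen_pointReflection (i : Fin 3) :
    elen (fun k => (2 : ℝ) • c - p k) i = elen p i := by
  rw [elen, elen, edgeVec_pointReflection, len_neg]

lemma tvec_pointReflection (i : Fin 3) :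
    tvec (fun k => (2 : ℝ) • c - p k) i = -tvec p i := by
  rw [tvec, tvec, edgeVec_pointReflection, elen_pointReflection, smul_neg]

lemma nvec_pointReflection (i : Fin 3) :
    nvec (fun k => (2 : ℝ) • c - p k) i = -nvec p i := by
  simp [nvec, tvec_pointReflection]

lemma angleAt_pointReflection (i : Fin 3) :
    angleAt (fun k => (2 : ℝ) • c - p k) i = angleAt p i := by
  have hdiff : ∀ a b : Fin 3, ((2 : ℝ) • c - p a) - ((2 : ℝ) • c - p b) = -(p a - p b) := by
    intro a b; abel
  simp only [angleAt, hdiff, dotp_neg_neg, len_neg]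

lemma phiHHJ_pointReflection (i : Fin 3) :
    phiHHJ (fun k => (2 : ℝ) • c - p k) i = phiHHJ p i := by
  simp only [phiHHJ, angleAt_pointReflection, tvec_pointReflection, outerProd_neg_neg]

lemma edgeAvg_pointReflection (j : Fin 3) (g : ℝ × ℝ → ℝ) :
    edgeAvg (fun k => (2 : ℝ) • c - p k) j g = edgeAvg p j (fun y => g ((2 : ℝ) • c - y)) := by
  refine intervalIntegral.integral_congr fun s _ => ?_
  simp only [smul_sub]
  congr 1
  abel

lemma PiHHJ_pointReflection (τ : ℝ × ℝ → Matrix (Fin 2) (Fin 2) ℝ) :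
    PiHHJ (fun k => (2 : ℝ) • c - p k) τ = PiHHJ p (fun y => τ ((2 : ℝ) • c - y)) := by
  simp only [PiHHJ, phiHHJ_pointReflection, edgeAvg_pointReflection, nvec_pointReflection,
    qf_neg]

lemma centroid_pointReflection :
    centroid (fun k => (2 : ℝ) • c - p k) = (2 : ℝ) • c - centroid p := by
  ext <;> simp [centroid] <;> ring

lemma monoC_pointReflection (α : ℕ × ℕ) :
    monoC (fun k => (2 : ℝ) • c - p k) α
      = fun x => (-1 : ℝ) ^ (α.1 + α.2) * monoC p α ((2 : ℝ) • c - x) := by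
  funext x
  simp only [monoC, centroid_pointReflection, Prod.fst_sub, Prod.snd_sub, pow_add]
  rw [mul_mul_mul_comm, ← mul_pow, ← mul_pow]
  congr 2 <;> ring

lemma hess_monoC_pointReflection (α : ℕ × ℕ) (x : ℝ × ℝ) :
    hess (monoC (fun k => (2 : ℝ) • c - p k) α) x
      = (-1 : ℝ) ^ (α.1 + α.2) • hess (monoC p α) ((2 : ℝ) • c - x) := by
  rw [monoC_pointReflection, hess_const_mul, hess_comp_const_sub]

lemma tri_pointReflection :
    tri (fun k => (2 : ℝ) • c - p k) = (fun x => (2 : ℝ) • c - x) '' tri p := by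
  let T : (ℝ × ℝ) →ᵃ[ℝ] (ℝ × ℝ) := AffineMap.const ℝ (ℝ × ℝ) ((2 : ℝ) • c) - AffineMap.id ℝ _
  have hT : ⇑T = fun x => (2 : ℝ) • c - x := rfl
  rw [← hT]
  unfold tri
  rw [T.image_convexHull, hT]
  simp [Set.image_insert_eq]

lemma setIntegral_tri_pointReflection (f : ℝ × ℝ → ℝ) :
    ∫ x in tri (fun k => (2 : ℝ) • c - p k), f x = ∫ x in tri p, f ((2 : ℝ) • c - x) := by
  rw [tri_pointReflection,
    (Measure.measurePreserving_sub_left volume ((2 : ℝ) • c)).setIntegral_image_emb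
      (Homeomorph.subLeft ((2 : ℝ) • c)).measurableEmbedding]

lemma hess_sub_PiHHJ_monoC_pointReflection (α : ℕ × ℕ) (x : ℝ × ℝ) :
    hess (monoC (fun k => (2 : ℝ) • c - p k) α) ((2 : ℝ) • c - x)
        - PiHHJ (fun k => (2 : ℝ) • c - p k) (hess (monoC (fun k => (2 : ℝ) • c - p k) α))
      = (-1 : ℝ) ^ (α.1 + α.2) • (hess (monoC p α) x - PiHHJ p (hess (monoC p α))) := by
  simp only [PiHHJ_pointReflection, hess_monoC_pointReflection, sub_sub_cancel, PiHHJ_smul,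
    smul_sub]

theorem cKab_pointReflection (α β : ℕ × ℕ) :
    cKab (fun k => (2 : ℝ) • c - p k) α β
      = (-1 : ℝ) ^ (β.1 + β.2) * (-1 : ℝ) ^ (α.1 + α.2) * cKab p α β := by
  rw [cKab, setIntegral_tri_pointReflection, cKab, ← integral_const_mul]
  simp only [hess_sub_PiHHJ_monoC_pointReflection, frob_smul_smul]

end PointReflection

end PaperStmt

open PaperStmt in
theorem cKab_point_reflection_antisymm_general
    (p : Fin 3 → ℝ × ℝ) (c : ℝ × ℝ)
    (α β : ℕ × ℕ) (hα : α.1 + α.2 = 4) (hβ : β.1 + β.2 = 3) :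
    cKab p α β = -cKab (fun k => (2 : ℝ) • c - p k) α β := by
  rw [cKab_pointReflection, hα, hβ]
  norm_num

open PaperStmt in
/-- Under the point reflection `T(x) = 2c − x` mapping the triangle `K₁` onto `K₂`, the
quantities `c_K^{αβ}` with `|α| = 4`, `|β| = 3` change sign: `c_{K₁}^{αβ} = −c_{K₂}^{αβ}`. -/
theorem cKab_point_reflection_antisymm
    (p : Fin 3 → ℝ × ℝ) (hp : Ccw p) (c : ℝ × ℝ)
    (α β : ℕ × ℕ) (hα : α.1 + α.2 = 4) (hβ : β.1 + β.2 = 3) :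
    cKab p α β = -cKab (fun k => (2 : ℝ) • c - p k) α β :=
  cKab_point_reflection_antisymm_general p c α β hα hβ
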